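/- arXiv:2204.06181 — 2 statements merged into one kernel-verified Lean document; each statement's English description precedes it below -/
import Mathlib

section
/- Let A be an m×n matrix with entries in [0,1] and b ∈ [0,1]^m. Define x̄_j = min over i of (if a_{ij} ≥ b_i then b_i + 1 - a_{ij} else 1). Then for every x ∈ [0,1]^n satisfying max_j T_L(a_{ij}, x_j) = b_i for all i, one has x ≤ x̄ componentwise. -/
/-- The Łukasiewicz t-norm. -/
noncomputable def TL (a x : ℝ) : ℝ := max (a + x - 1) 0

/-- The candidate maximum solution `x̄` (empty min = 1, handled by the `if`). -/
noncomputable def xbar {m n : ℕ} [NeZero m] (A : Fin m → Fin n → ℝ) (b : Fin m → ℝ)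
    (j : Fin n) : ℝ :=
  Finset.univ.inf' Finset.univ_nonempty
    (fun i => if b i ≤ A i j then b i + 1 - A i j else 1)

/-- `x` is a feasible solution of the system `A φ x = b`. -/
def Feasible {m n : ℕ} [NeZero m] [NeZero n] (A : Fin m → Fin n → ℝ) (b : Fin m → ℝ)
    (x : Fin n → ℝ) : Prop :=
  (∀ j, x j ∈ Set.Icc (0:ℝ) 1) ∧
  ∀ i, Finset.univ.sup' Finset.univ_nonempty (fun j => TL (A i j) (x j)) = b i

/-- The candidate minimal point `X(e)` associated to a selection `e`
(empty max = 0, handled by the `if`). -/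
noncomputable def Xe {m n : ℕ} [NeZero m] (A : Fin m → Fin n → ℝ) (b : Fin m → ℝ)
    (e : Fin m → Fin n) (j : Fin n) : ℝ :=
  Finset.univ.sup' Finset.univ_nonempty
    (fun i => if e i = j ∧ b i ≠ 0 then b i + 1 - A i j else 0)

/-- `e` is a valid selection: `e i ∈ J̄ᵢ` for every `i`. -/
def ValidSel {m n : ℕ} [NeZero m] (A : Fin m → Fin n → ℝ) (b : Fin m → ℝ)
    (e : Fin m → Fin n) : Prop :=
  ∀ i, b i ≤ A i (e i) ∧ TL (A i (e i)) (xbar A b (e i)) = b i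

theorem add_sub_one_le_TL (a x : ℝ) : a + x - 1 ≤ TL a x := le_max_left _ _

section

variable {m n : ℕ} [NeZero m] (A : Fin m → Fin n → ℝ) (b : Fin m → ℝ)

theorem le_xbar {j : Fin n} {y : ℝ} (hy : y ≤ 1)
    (h : ∀ i, b i ≤ A i j → y ≤ b i + 1 - A i j) : y ≤ xbar A b j := by
  refine Finset.le_inf' _ _ fun i _ => ?_
  split_ifs with hi
  exacts [h i hi, hy]

variable [NeZero n] {A b} {x : Fin n → ℝ}

theorem Feasible.TL_le (hx : Feasible A b x) (i : Fin m) (j : Fin n) :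
    TL (A i j) (x j) ≤ b i :=
  hx.2 i ▸ Finset.le_sup' (fun j => TL (A i j) (x j)) (Finset.mem_univ j)

theorem Feasible.le_add_sub (hx : Feasible A b x) (i : Fin m) (j : Fin n) :
    x j ≤ b i + 1 - A i j := by
  linarith [add_sub_one_le_TL (A i j) (x j), hx.TL_le i j]

end

theorem stmt_6_general (m n : ℕ) [NeZero m] [NeZero n] (A : Fin m → Fin n → ℝ) (b : Fin m → ℝ)
    (x : Fin n → ℝ) (hx : Feasible A b x) :
    ∀ j, x j ≤ xbar A b j :=
  fun j => le_xbar A b (hx.1 j).2 fun i _ => hx.le_add_sub i j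

theorem stmt_6 (m n : ℕ) [NeZero m] [NeZero n] (A : Fin m → Fin n → ℝ) (b : Fin m → ℝ)
    (hA : ∀ i j, A i j ∈ Set.Icc (0:ℝ) 1) (hb : ∀ i, b i ∈ Set.Icc (0:ℝ) 1)
    (x : Fin n → ℝ) (hx : Feasible A b x) :
    ∀ j, x j ≤ xbar A b j :=
  stmt_6_general m n A b x hx
end

section
/- With x̄ defined as the candidate maximum solution, for every x ∈ [0,1]^n and every i, if x ≤ x̄ componentwise then max_j T_L(a_{ij}, x_j) ≤ b_i. -/
/-!
If `bᵢ ≤ aᵢⱼ`, the minimum defining `x̄ⱼ` gives `x̄ⱼ ≤ bᵢ + 1 - aᵢⱼ`, i.e. `aᵢⱼ + x̄ⱼ - 1 ≤ bᵢ`.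
Otherwise `aᵢⱼ < bᵢ`, and the same bound follows from `x̄ⱼ ≤ 1`. So `aᵢⱼ + xⱼ - 1 ≤ bᵢ` whenever
`xⱼ ≤ x̄ⱼ`, and the truncation at `0` in `T_L` is harmless because `0 ≤ bᵢ`.
-/

theorem TL_le_iff {a x c : ℝ} : TL a x ≤ c ↔ a + x - 1 ≤ c ∧ 0 ≤ c :=
  max_le_iff

section xbar

variable {m n : ℕ} [NeZero m] (A : Fin m → Fin n → ℝ) (b : Fin m → ℝ)

theorem xbar_le_of_le {i : Fin m} {j : Fin n} (h : b i ≤ A i j) :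
    xbar A b j ≤ b i + 1 - A i j :=
  Finset.inf'_le_of_le _ (Finset.mem_univ i) (by simp [h])

theorem xbar_le_one (j : Fin n) : xbar A b j ≤ 1 := by
  obtain ⟨i, -, hi⟩ := Finset.exists_mem_eq_inf' Finset.univ_nonempty
    (fun i => if b i ≤ A i j then b i + 1 - A i j else 1)
  rw [xbar, hi]
  split_ifs with h <;> linarith

theorem TL_le_of_le_xbar {i : Fin m} {j : Fin n} {y : ℝ} (hb : 0 ≤ b i)
    (hy : y ≤ xbar A b j) : TL (A i j) y ≤ b i := by
  refine TL_le_iff.2 ⟨?_, hb⟩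
  by_cases h : b i ≤ A i j
  · linarith [xbar_le_of_le A b h]
  · linarith [xbar_le_one A b j]

end xbar

theorem stmt_8_general (m n : ℕ) [NeZero m] [NeZero n] (A : Fin m → Fin n → ℝ) (b : Fin m → ℝ)
    (hb : ∀ i, b i ∈ Set.Icc (0:ℝ) 1)
    (x : Fin n → ℝ)
    (hle : ∀ j, x j ≤ xbar A b j) :
    ∀ i, Finset.univ.sup' Finset.univ_nonempty (fun j => TL (A i j) (x j)) ≤ b i :=
  fun i => Finset.sup'_le _ _ fun j _ => TL_le_of_le_xbar A b (hb i).1 (hle j)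

theorem stmt_8 (m n : ℕ) [NeZero m] [NeZero n] (A : Fin m → Fin n → ℝ) (b : Fin m → ℝ)
    (hA : ∀ i j, A i j ∈ Set.Icc (0:ℝ) 1) (hb : ∀ i, b i ∈ Set.Icc (0:ℝ) 1)
    (x : Fin n → ℝ) (hx : ∀ j, x j ∈ Set.Icc (0:ℝ) 1)
    (hle : ∀ j, x j ≤ xbar A b j) :
    ∀ i, Finset.univ.sup' Finset.univ_nonempty (fun j => TL (A i j) (x j)) ≤ b i :=
  stmt_8_general m n A b hb x hle
end
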